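/- (Reduction to Clopper–Pearson.) Let D := {0,1} (so s_D = 1) and T(y) := (1/n)Σ_{i=1}^n y_i be the sample mean. Let x ∈ {0,1}ⁿ and let p := #{i : x_i = 0} be the number of zeros in x. Then, with the convention u_{(0)} := 0, for every u ∈ [0,1]ⁿ: b_{D,T}(x,u) = 1 − u_{(p)}, where u_{(p)} is the p-th order statistic of u (and b_{D,T}(x,u) = 1 when p = 0). Consequently, for U = (U_1,…,U_n) i.i.d. Uniform(0,1) and α ∈ (0,1), b^α_{D,T}(x) = Q(1 − α, 1 − U_{(p)}). -/

import Mathlib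

/-!
For 0/1 data the sorted sample is a step from 0 to 1 at its number `k` of zeros, so the induced
mean with `s = 1` telescopes to `1 - u_{(k)}`. For the sample mean, `T z ≤ T x` says exactly that
`z` has at least as many zeros as `x`; as `k ↦ u_{(k)}` is nondecreasing (with `u_{(0)} = 0`), the
supremum is attained at `z = x` and equals `1 - u_{(p)}`. The quantile identity follows since a
uniform sample lies in `[0,1]ⁿ` almost surely.
-/

open MeasureTheory Set

/-- The sorted rearrangement (order statistics) of a finite real vector:
`sortedVec x i` is the (i+1)-st order statistic `x_{(i+1)}` (0-indexed). -/
noncomputable def sortedVec {n : ℕ} (x : Fin n → ℝ) : Fin n → ℝ :=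
  x ∘ ⇑(Tuple.sort x)

/-- The induced mean `m(x, ℓ) = s - ∑ ℓ_{(i)} (x_{(i+1)} - x_{(i)})`, with `x_{(n+1)} := s`. -/
noncomputable def inducedMean {n : ℕ} (s : ℝ) (x ℓ : Fin n → ℝ) : ℝ :=
  s - ∑ i : Fin n, sortedVec ℓ i * ((Fin.snoc (sortedVec x) s : Fin (n+1) → ℝ) i.succ - sortedVec x i)

/-- `S_{D,T}(x) = {y ∈ Dⁿ : T y ≤ T x}`. -/
def SsetD {n : ℕ} (D : Set ℝ) (T : (Fin n → ℝ) → ℝ) (x : Fin n → ℝ) : Set (Fin n → ℝ) :=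
  {y | (∀ i, y i ∈ D) ∧ T y ≤ T x}

/-- `b_{D,T}(x, u) = sup_{z ∈ S_{D,T}(x)} m_{sup D}(z, u)`. -/
noncomputable def bfun {n : ℕ} (D : Set ℝ) (T : (Fin n → ℝ) → ℝ) (x u : Fin n → ℝ) : ℝ :=
  sSup ((fun z => inducedMean (sSup D) z u) '' SsetD D T x)

/-- The uniform probability measure on `[0,1]`. -/
noncomputable def unif01 : Measure ℝ := volume.restrict (Icc (0:ℝ) 1)

/-- The law of an i.i.d. sample of size `n` from Uniform(0,1). -/
noncomputable def unifPi (n : ℕ) : Measure (Fin n → ℝ) := Measure.pi fun _ => unif01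

/-- The `p`-quantile of the random variable `Y` under `μ`:
`Q(p, Y) = inf {y : P(Y ≤ y) ≥ p}`. -/
noncomputable def rquantile {Ω : Type*} [MeasurableSpace Ω] (μ : Measure Ω)
    (Y : Ω → ℝ) (p : ℝ) : ℝ :=
  sInf {y : ℝ | ENNReal.ofReal p ≤ μ {ω | Y ω ≤ y}}

/-- The upper confidence bound `b^α_{D,T}(x) = Q(1 - α, b_{D,T}(x, U))`, `U` i.i.d. Uniform(0,1). -/
noncomputable def ucb {n : ℕ} (D : Set ℝ) (T : (Fin n → ℝ) → ℝ) (α : ℝ)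
    (x : Fin n → ℝ) : ℝ :=
  rquantile (unifPi n) (bfun D T x) (1 - α)

/-- The stairstep function `G_{x,ℓ}` with top value at `s`. -/
noncomputable def stairstep {n : ℕ} (s : ℝ) (x ℓ : Fin n → ℝ) (t : ℝ) : ℝ :=
  if s ≤ t then 1 else sSup ({0} ∪ (sortedVec ℓ '' {i | sortedVec x i ≤ t}))

/-- The `k`-th smallest value (1-indexed) among `m 0, …, m (L-1)`. -/
noncomputable def kthSmallest {L : ℕ} (m : Fin L → ℝ) (k : ℕ) : ℝ :=
  sInf {y : ℝ | k ≤ Nat.card {j : Fin L // m j ≤ y}}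

open scoped Finset

/-- `orderStat u k` is the paper's `u_{(k)}`: `sortedVec` is 0-indexed, and `u_{(0)} := 0`. -/
noncomputable def orderStat {n : ℕ} (u : Fin n → ℝ) : Fin (n + 1) → ℝ :=
  Fin.cons 0 (sortedVec u)

noncomputable def numZeros {n : ℕ} (z : Fin n → ℝ) : Fin (n + 1) :=
  ⟨#{i | z i = 0}, Nat.lt_succ_of_le ((Finset.card_le_univ _).trans_eq (Fintype.card_fin n))⟩

lemma sortedVec_monotone {n : ℕ} (u : Fin n → ℝ) : Monotone (sortedVec u) :=
  Tuple.monotone_sort u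

@[simp] lemma orderStat_zero {n : ℕ} (u : Fin n → ℝ) : orderStat u 0 = 0 := rfl

@[simp] lemma orderStat_succ {n : ℕ} (u : Fin n → ℝ) (i : Fin n) :
    orderStat u i.succ = sortedVec u i := rfl

lemma orderStat_monotone {n : ℕ} {u : Fin n → ℝ} (hu : ∀ i, 0 ≤ u i) :
    Monotone (orderStat u) := by
  rw [monotone_iff_forall_lt]
  refine (Fin.liftFun_cons (· ≤ ·)).2 ⟨fun _ => hu _, ?_⟩
  exact monotone_iff_forall_lt.1 (sortedVec_monotone u)

lemma sum_mul_step_succ_sub {n : ℕ} (ℓ : Fin n → ℝ) (k : Fin (n + 1)) :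
    ∑ i : Fin n, ℓ i * ((if i.succ < k then 0 else 1) - (if i.castSucc < k then 0 else 1))
      = (Fin.cons 0 ℓ : Fin (n + 1) → ℝ) k := by
  have step (i : Fin n) : ((if i.succ < k then 0 else 1) - (if i.castSucc < k then 0 else 1) : ℝ)
      = if i.succ = k then 1 else 0 := by
    simp only [Fin.lt_def, Fin.ext_iff, Fin.val_succ, Fin.val_castSucc]
    split_ifs <;> first | omega | norm_num
  simp only [step, mul_ite, mul_one, mul_zero]
  induction k using Fin.cases with
  | zero => simp [Fin.succ_ne_zero]
  | succ j => simp [Fin.succ_inj]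

section ZeroOne

variable {n : ℕ} {z : Fin n → ℝ}

lemma numZeros_sortedVec (z : Fin n → ℝ) : numZeros (sortedVec z) = numZeros z := by
  apply Fin.ext
  change #{i | sortedVec z i = 0} = #{i | z i = 0}
  exact Finset.card_equiv (Tuple.sort z) fun i => by simp only [Finset.mem_filter_univ]; rfl

lemma Monotone.eq_ite_of_mem_zero_one {g : Fin n → ℝ} (hg : Monotone g)
    (h01 : ∀ i, g i ∈ ({0, 1} : Set ℝ)) (i : Fin n) :
    g i = if (i : ℕ) < #{j | g j = 0} then 0 else 1 := by
  obtain h | h : g i = 0 ∨ g i = 1 := h01 i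
  · have : Finset.Iic i ⊆ ({j | g j = 0} : Finset _) := fun j hj => by
      rw [Finset.mem_filter_univ]
      obtain h' | h' : g j = 0 ∨ g j = 1 := h01 j
      · exact h'
      · linarith [hg (Finset.mem_Iic.1 hj)]
    have := Finset.card_le_card this
    rw [Fin.card_Iic] at this
    rw [h, if_pos (by omega)]
  · have : ({j | g j = 0} : Finset _) ⊆ Finset.Iio i := fun j hj => by
      rw [Finset.mem_filter_univ] at hj
      by_contra hji
      linarith [hg (not_lt.1 (mt Finset.mem_Iio.2 hji))]
    have := Finset.card_le_card this
    rw [Fin.card_Iio] at this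
    rw [h, if_neg (by omega)]

lemma snoc_sortedVec_of_mem_zero_one (hz : ∀ i, z i ∈ ({0, 1} : Set ℝ)) (j : Fin (n + 1)) :
    (Fin.snoc (sortedVec z) 1 : Fin (n + 1) → ℝ) j = if j < numZeros z then 0 else 1 := by
  induction j using Fin.lastCases with
  | last => rw [Fin.snoc_last, if_neg (not_lt.2 (Fin.le_last _))]
  | cast i =>
    rw [Fin.snoc_castSucc, (sortedVec_monotone z).eq_ite_of_mem_zero_one (fun i => hz _),
      ← numZeros_sortedVec]
    rfl

lemma sum_add_numZeros_of_mem_zero_one (hz : ∀ i, z i ∈ ({0, 1} : Set ℝ)) :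
    ∑ i, z i + (numZeros z : ℕ) = n := by
  have h1 (i : Fin n) : z i + (if z i = 0 then 1 else 0) = 1 := by
    obtain h | h : z i = 0 ∨ z i = 1 := hz i <;> simp [h]
  rw [numZeros, ← Finset.sum_boole, ← Finset.sum_add_distrib]
  simp [h1]

lemma numZeros_le_of_mean_le {x : Fin n → ℝ} (hx : ∀ i, x i ∈ ({0, 1} : Set ℝ))
    (hz : ∀ i, z i ∈ ({0, 1} : Set ℝ)) (h : (∑ i, z i) / n ≤ (∑ i, x i) / n) :
    numZeros x ≤ numZeros z := by
  rcases n.eq_zero_or_pos with rfl | hn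
  · exact Fin.le_def.2 (by have := (numZeros x).isLt; omega)
  rw [div_le_div_iff_of_pos_right (by exact_mod_cast hn)] at h
  have hx' := sum_add_numZeros_of_mem_zero_one hx
  have hz' := sum_add_numZeros_of_mem_zero_one hz
  rw [Fin.le_def]
  exact_mod_cast (by linarith : ((numZeros x : ℕ) : ℝ) ≤ (numZeros z : ℕ))

lemma inducedMean_one_of_mem_zero_one (hz : ∀ i, z i ∈ ({0, 1} : Set ℝ)) (u : Fin n → ℝ) :
    inducedMean 1 z u = 1 - orderStat u (numZeros z) := by
  rw [inducedMean, orderStat, ← sum_mul_step_succ_sub]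
  congr 1
  refine Finset.sum_congr rfl fun i _ => ?_
  rw [snoc_sortedVec_of_mem_zero_one hz, ← snoc_sortedVec_of_mem_zero_one hz i.castSucc,
    Fin.snoc_castSucc]

end ZeroOne

lemma bfun_zero_one_mean {n : ℕ} (T : (Fin n → ℝ) → ℝ)
    (hT : ∀ y : Fin n → ℝ, T y = (∑ i, y i) / n) {x u : Fin n → ℝ}
    (hx : ∀ i, x i ∈ ({0, 1} : Set ℝ)) (hu : ∀ i, 0 ≤ u i) :
    bfun {0, 1} T x u = 1 - orderStat u (numZeros x) := by
  have hsup : sSup ({0, 1} : Set ℝ) = 1 := by simp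
  rw [bfun, hsup]
  refine IsGreatest.csSup_eq ⟨⟨x, ⟨hx, le_rfl⟩, inducedMean_one_of_mem_zero_one hx u⟩, ?_⟩
  rintro _ ⟨z, ⟨hz, hTz⟩, rfl⟩
  rw [hT, hT] at hTz
  change inducedMean 1 z u ≤ _
  rw [inducedMean_one_of_mem_zero_one hz]
  exact sub_le_sub_left (orderStat_monotone hu (numZeros_le_of_mean_le hx hz hTz)) 1

lemma rquantile_congr_ae {Ω : Type*} [MeasurableSpace Ω] {μ : Measure Ω} {f g : Ω → ℝ}
    (h : f =ᵐ[μ] g) (q : ℝ) : rquantile μ f q = rquantile μ g q := by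
  have (y : ℝ) : μ {ω | f ω ≤ y} = μ {ω | g ω ≤ y} :=
    measure_congr (Filter.eventuallyEq_set.2 (h.mono fun ω hω => by simp [hω]))
  simp only [rquantile, this]

instance isProbabilityMeasure_unif01 : IsProbabilityMeasure unif01 :=
  ⟨by simp [unif01]⟩

lemma ae_mem_Icc_unifPi (n : ℕ) : ∀ᵐ u ∂unifPi n, ∀ i, u i ∈ Icc (0 : ℝ) 1 :=
  Measure.ae_pi_le_pi (Filter.eventually_pi fun _ => ae_restrict_mem measurableSet_Icc)

lemma ucb_zero_one_mean {n : ℕ} (T : (Fin n → ℝ) → ℝ)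
    (hT : ∀ y : Fin n → ℝ, T y = (∑ i, y i) / n) {x : Fin n → ℝ}
    (hx : ∀ i, x i ∈ ({0, 1} : Set ℝ)) (α : ℝ) :
    ucb {0, 1} T α x = rquantile (unifPi n) (fun u => 1 - orderStat u (numZeros x)) (1 - α) :=
  rquantile_congr_ae ((ae_mem_Icc_unifPi n).mono fun _ hu =>
    bfun_zero_one_mean T hT hx fun i => (hu i).1) _

theorem stmt18_general {n : ℕ} (T : (Fin n → ℝ) → ℝ)
    (hT : ∀ y : Fin n → ℝ, T y = (∑ i, y i) / n)
    (x : Fin n → ℝ) (hx : ∀ i, x i ∈ ({0, 1} : Set ℝ))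
    (p : ℕ) (hp : p = Nat.card {i : Fin n // x i = 0})
    (α : ℝ) :
    (∀ u : Fin n → ℝ, (∀ i, u i ∈ Set.Icc (0:ℝ) 1) →
      (p = 0 → bfun ({0, 1} : Set ℝ) T x u = 1) ∧
      (∀ hpn : p - 1 < n, 0 < p →
        bfun ({0, 1} : Set ℝ) T x u = 1 - sortedVec u ⟨p - 1, hpn⟩)) ∧
    (p = 0 → ucb ({0, 1} : Set ℝ) T α x
        = rquantile (unifPi n) (fun _ => (1 : ℝ)) (1 - α)) ∧
    (∀ hpn : p - 1 < n, 0 < p →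
      ucb ({0, 1} : Set ℝ) T α x
        = rquantile (unifPi n) (fun u => 1 - sortedVec u ⟨p - 1, hpn⟩) (1 - α)) := by
  have hp' : (numZeros x : ℕ) = p := by
    simp [numZeros, hp, Nat.card_eq_fintype_card, Fintype.card_subtype]
  have numZeros_of_eq_zero (hp0 : p = 0) : numZeros x = 0 := Fin.ext (by simp [hp', hp0])
  have numZeros_of_pos (hpn : p - 1 < n) (hp0 : 0 < p) : numZeros x = Fin.succ ⟨p - 1, hpn⟩ :=
    Fin.ext (by simp [hp']; omega)
  refine ⟨fun u hu => ⟨fun hp0 => ?_, fun hpn hp0 => ?_⟩, fun hp0 => ?_, fun hpn hp0 => ?_⟩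
  · simp [bfun_zero_one_mean T hT hx fun i => (hu i).1, numZeros_of_eq_zero hp0]
  · rw [bfun_zero_one_mean T hT hx fun i => (hu i).1, numZeros_of_pos hpn hp0, orderStat_succ]
  · simp [ucb_zero_one_mean T hT hx, numZeros_of_eq_zero hp0]
  · simp only [ucb_zero_one_mean T hT hx, numZeros_of_pos hpn hp0, orderStat_succ]

/-- Reduction to Clopper–Pearson: for `D = {0,1}` and `T` the
sample mean, with `p` the number of zeros in `x` and the convention
`u_{(0)} := 0`, one has `b_{D,T}(x, u) = 1 - u_{(p)}` for every `u ∈ [0,1]ⁿ`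
(so `b = 1` when `p = 0`), and consequently
`b^α_{D,T}(x) = Q(1 - α, 1 - U_{(p)})`. -/
theorem stmt18 {n : ℕ} (T : (Fin n → ℝ) → ℝ)
    (hT : ∀ y : Fin n → ℝ, T y = (∑ i, y i) / n)
    (x : Fin n → ℝ) (hx : ∀ i, x i ∈ ({0, 1} : Set ℝ))
    (p : ℕ) (hp : p = Nat.card {i : Fin n // x i = 0})
    (α : ℝ) (hα : α ∈ Set.Ioo (0:ℝ) 1) :
    (∀ u : Fin n → ℝ, (∀ i, u i ∈ Set.Icc (0:ℝ) 1) →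
      (p = 0 → bfun ({0, 1} : Set ℝ) T x u = 1) ∧
      (∀ hpn : p - 1 < n, 0 < p →
        bfun ({0, 1} : Set ℝ) T x u = 1 - sortedVec u ⟨p - 1, hpn⟩)) ∧
    (p = 0 → ucb ({0, 1} : Set ℝ) T α x
        = rquantile (unifPi n) (fun _ => (1 : ℝ)) (1 - α)) ∧
    (∀ hpn : p - 1 < n, 0 < p →
      ucb ({0, 1} : Set ℝ) T α x
        = rquantile (unifPi n) (fun u => 1 - sortedVec u ⟨p - 1, hpn⟩) (1 - α)) :=
  stmt18_general T hT x hx p hp α
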